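/- arXiv:0905.0463 — 7 statements merged into one kernel-verified Lean document; each statement's English description precedes it below -/
import Mathlib

section
/- If (γ_n) is a nonincreasing sequence in (0,1) with Γ_n := Σ_{k=1}^n γ_k → ∞, and γ_n = O(Γ_n e^{-θ Γ_n}) for some θ > 0, then limsup_{n→∞} γ_n n / log n ≤ 1/θ. -/
open Filter Finset Topology

/-!
Writing `x = θ Γ_n`, the bound `γ_k e^{θ Γ_k} ≤ C Γ_k` and the convexity estimate
`e^b - e^a ≤ (b - a) e^b` telescope to `e^x ≤ 1 + C n x`. This forces first `x ≤ 2 C n`, then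
`x ≤ log (1 + 2 C² n²)`, and feeding that back in, `x ≤ log n + log (1 + C log (1 + 2 C² n²))`,
i.e. `θ Γ_n ≤ log n + O(log log n)`. Since `γ` is nonincreasing, `n γ_n ≤ Γ_n`, hence
`n γ_n / log n ≤ (1 + o(1)) / θ`.
-/

namespace Real

theorem exp_sub_exp_le_mul_exp (a b : ℝ) : exp b - exp a ≤ (b - a) * exp b := by
  have h := mul_le_mul_of_nonneg_right (add_one_le_exp (a - b)) (exp_pos b).le
  rw [← exp_add, sub_add_cancel] at h
  linarith

theorem le_two_mul_of_exp_le_one_add_mul {x a : ℝ} (hx : 0 ≤ x) (ha : 0 ≤ a)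
    (h : exp x ≤ 1 + a * x) : x ≤ 2 * a := by
  nlinarith [quadratic_le_exp_of_nonneg hx]

theorem le_log_add_log_of_exp_le_one_add_mul {x K t : ℝ} (hx : 0 ≤ x) (hK : 0 ≤ K) (ht : 1 ≤ t)
    (h : exp x ≤ 1 + K * t * x) :
    x ≤ log t + log (1 + K * log (1 + 2 * K ^ 2 * t ^ 2)) := by
  have hlog {y : ℝ} (hy : 0 < y) (hxy : exp x ≤ y) : x ≤ log y := (le_log_iff_exp_le hy).2 hxy
  have crude : x ≤ log (1 + 2 * K ^ 2 * t ^ 2) := by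
    have hx_le := le_two_mul_of_exp_le_one_add_mul hx (by positivity) h
    refine hlog (by positivity) ?_
    calc exp x ≤ 1 + K * t * x := h
      _ ≤ 1 + K * t * (2 * (K * t)) := by gcongr
      _ = 1 + 2 * K ^ 2 * t ^ 2 := by ring
  calc x ≤ log (t * (1 + K * x)) := hlog (by positivity) (h.trans (by nlinarith))
    _ = log t + log (1 + K * x) := log_mul (by positivity) (by positivity)
    _ ≤ log t + log (1 + K * log (1 + 2 * K ^ 2 * t ^ 2)) := by gcongr

theorem isLittleO_log_one_add_mul_log_one_add_sq {K : ℝ} (hK : 0 < K) :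
    (fun t => log (1 + K * log (1 + 2 * K ^ 2 * t ^ 2))) =o[atTop] log := by
  set u : ℝ → ℝ := fun t => 1 + K * log (1 + 2 * K ^ 2 * t ^ 2)
  have hu : Tendsto u atTop atTop :=
    tendsto_atTop_add_const_left _ _ <| (tendsto_log_atTop.comp <| tendsto_atTop_add_const_left _ _ <|
      (tendsto_pow_atTop two_ne_zero).const_mul_atTop (by positivity)).const_mul_atTop hK
  have hlog_sq : (fun t => log (1 + 2 * K ^ 2 * t ^ 2)) =O[atTop] log := by
    refine Asymptotics.IsBigO.of_bound 3 ?_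
    filter_upwards [eventually_ge_atTop (1 + 2 * K ^ 2)] with t ht
    have ht1 : 1 ≤ t := le_trans (by nlinarith) ht
    rw [norm_of_nonneg (log_nonneg (by nlinarith)), norm_of_nonneg (log_nonneg ht1)]
    calc log (1 + 2 * K ^ 2 * t ^ 2) ≤ log (t ^ 3) := log_le_log (by positivity) (by nlinarith)
      _ = 3 * log t := by rw [log_pow]; norm_num
  have hu_log : u =O[atTop] log :=
    ((Asymptotics.isLittleO_one_left_iff ℝ).2
      (tendsto_norm_atTop_atTop.comp tendsto_log_atTop)).isBigO.add (hlog_sq.const_mul_left K)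
  exact (isLittleO_log_id_atTop.comp_tendsto hu).trans_isBigO hu_log

end Real

open Real

section PartialSums

variable {γ Γ : ℕ → ℝ}

theorem partialSum_succ (hΓ : ∀ n, Γ n = ∑ k ∈ Icc 1 n, γ k) (n : ℕ) :
    Γ (n + 1) = Γ n + γ (n + 1) := by
  rw [hΓ, hΓ, sum_Icc_succ_top (by omega)]

theorem partialSum_nonneg (hΓ : ∀ n, Γ n = ∑ k ∈ Icc 1 n, γ k) (hγ : ∀ n, 1 ≤ n → 0 ≤ γ n)
    (n : ℕ) : 0 ≤ Γ n :=
  hΓ n ▸ sum_nonneg fun k hk => hγ k (mem_Icc.1 hk).1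

theorem monotone_partialSum (hΓ : ∀ n, Γ n = ∑ k ∈ Icc 1 n, γ k) (hγ : ∀ n, 1 ≤ n → 0 ≤ γ n) :
    Monotone Γ :=
  monotone_nat_of_le_succ fun n => by
    rw [partialSum_succ hΓ]
    linarith [hγ (n + 1) n.succ_pos]

theorem nat_mul_le_partialSum (hΓ : ∀ n, Γ n = ∑ k ∈ Icc 1 n, γ k)
    (hmono : ∀ n, 1 ≤ n → γ (n + 1) ≤ γ n) (n : ℕ) : n * γ n ≤ Γ n := by
  have hanti := antitoneOn_nat_Ici_of_succ_le hmono
  have h := card_nsmul_le_sum (Icc 1 n) γ (γ n) fun k hk =>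
    hanti (mem_Icc.1 hk).1 ((mem_Icc.1 hk).1.trans (mem_Icc.1 hk).2) (mem_Icc.1 hk).2
  simpa [hΓ n, nsmul_eq_mul] using h

theorem exp_mul_partialSum_le (hΓ : ∀ n, Γ n = ∑ k ∈ Icc 1 n, γ k) (hγ : ∀ n, 1 ≤ n → 0 ≤ γ n)
    {θ C : ℝ} (hθ : 0 ≤ θ) (hC : 0 ≤ C)
    (hO : ∀ n, 1 ≤ n → γ n ≤ C * Γ n * exp (-θ * Γ n)) (n : ℕ) :
    exp (θ * Γ n) ≤ 1 + C * n * (θ * Γ n) := by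
  induction n with
  | zero => simp [hΓ]
  | succ n ih =>
    have hstep : exp (θ * Γ (n + 1)) - exp (θ * Γ n) ≤ θ * γ (n + 1) * exp (θ * Γ (n + 1)) := by
      have h := exp_sub_exp_le_mul_exp (θ * Γ n) (θ * Γ (n + 1))
      simpa only [partialSum_succ hΓ n, mul_add, add_sub_cancel_left] using h
    have hO' : γ (n + 1) * exp (θ * Γ (n + 1)) ≤ C * Γ (n + 1) := by
      have h := mul_le_mul_of_nonneg_right (hO (n + 1) n.succ_pos) (exp_pos (θ * Γ (n + 1))).le
      rwa [mul_assoc, ← exp_add, neg_mul, neg_add_cancel, exp_zero, mul_one] at h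
    have hΓ_le := monotone_partialSum hΓ hγ n.le_succ
    have hΓ_nonneg := partialSum_nonneg hΓ hγ n
    push_cast
    nlinarith [mul_le_mul_of_nonneg_left hO' hθ, mul_le_mul_of_nonneg_left hΓ_le
      (by positivity : 0 ≤ C * n * θ)]

end PartialSums

theorem stmt_0_general (γ : ℕ → ℝ) (Γ : ℕ → ℝ)
    (hΓ : ∀ n, Γ n = ∑ k ∈ Finset.Icc 1 n, γ k)
    (hpos : ∀ n, 1 ≤ n → 0 < γ n)
    (hmono : ∀ n, 1 ≤ n → γ (n + 1) ≤ γ n)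
    (θ : ℝ) (hθ : 0 < θ)
    (C : ℝ) (hC : 0 < C) (hO : ∀ n, 1 ≤ n → γ n ≤ C * Γ n * Real.exp (-θ * Γ n)) :
    Filter.limsup (fun n : ℕ => γ n * n / Real.log n) atTop ≤ 1 / θ := by
  have hγ : ∀ n, 1 ≤ n → 0 ≤ γ n := fun n hn => (hpos n hn).le
  set E : ℝ → ℝ := fun t => log (1 + C * log (1 + 2 * C ^ 2 * t ^ 2))
  have hΓ_le (n : ℕ) (hn : 1 ≤ n) : θ * Γ n ≤ log n + E n :=
    le_log_add_log_of_exp_le_one_add_mul (mul_nonneg hθ.le (partialSum_nonneg hΓ hγ n)) hC.le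
      (by exact_mod_cast hn) (exp_mul_partialSum_le hΓ hγ hθ.le hC.le hO n)
  have hE : Tendsto (fun n : ℕ => E n / log n) atTop (𝓝 0) :=
    ((isLittleO_log_one_add_mul_log_one_add_sq hC).comp_tendsto
      tendsto_natCast_atTop_atTop).tendsto_div_nhds_zero
  have hbound : Tendsto (fun n : ℕ => (1 + E n / log n) / θ) atTop (𝓝 (1 / θ)) := by
    simpa using (hE.const_add 1).div_const θ
  have hle : ∀ᶠ n : ℕ in atTop, γ n * n / log n ≤ (1 + E n / log n) / θ := by
    filter_upwards [eventually_ge_atTop 2] with n hn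
    have hlog : 0 < log n := log_pos (by exact_mod_cast hn)
    calc γ n * n / log n ≤ Γ n / log n := by
          gcongr
          linarith [nat_mul_le_partialSum hΓ hmono n]
      _ ≤ (log n + E n) / θ / log n := by
          gcongr
          rw [le_div_iff₀ hθ]
          linarith [hΓ_le n (by omega)]
      _ = (1 + E n / log n) / θ := by field_simp
  have hnonneg : ∀ᶠ n : ℕ in atTop, 0 ≤ γ n * n / log n :=
    eventually_atTop.2 ⟨1, fun n hn => by have := hγ n hn; positivity⟩
  exact (limsup_le_limsup hle (isCoboundedUnder_le_of_eventually_le atTop hnonneg)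
    hbound.isBoundedUnder_le).trans_eq hbound.limsup_eq

theorem stmt_0 (γ : ℕ → ℝ) (Γ : ℕ → ℝ)
    (hΓ : ∀ n, Γ n = ∑ k ∈ Finset.Icc 1 n, γ k)
    (hpos : ∀ n, 1 ≤ n → 0 < γ n) (hlt : ∀ n, 1 ≤ n → γ n < 1)
    (hmono : ∀ n, 1 ≤ n → γ (n + 1) ≤ γ n)
    (htend : Tendsto Γ atTop atTop)
    (θ : ℝ) (hθ : 0 < θ)
    (C : ℝ) (hC : 0 < C) (hO : ∀ n, 1 ≤ n → γ n ≤ C * Γ n * Real.exp (-θ * Γ n)) :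
    Filter.limsup (fun n : ℕ => γ n * n / Real.log n) atTop ≤ 1 / θ :=
  stmt_0_general γ Γ hΓ hpos hmono θ hθ C hC hO
end

section
/- If (γ_n) is a nonincreasing sequence in (0,1) with Γ_n := Σ_{k=1}^n γ_k → ∞, and γ_n = O(Γ_n e^{-θ Γ_n}) for some θ > 0, then limsup_{n→∞} Γ_n / log n ≤ 1/θ. -/
/-!
Since `exp` is convex, `exp (θ Γₙ₊₁) - exp (θ Γₙ) ≤ θ γₙ₊₁ exp (θ Γₙ₊₁) ≤ θ C Γₙ₊₁`, and telescoping
gives `exp (θ Γₙ) ≤ 1 + θ C n Γₙ`, i.e. `θ Γₙ ≤ log n + log Γₙ + O(1)`. As `log Γₙ ≤ ε Γₙ + O_ε(1)`,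
this yields `(θ - ε) Γₙ ≤ log n + O_ε(1)` for every `ε > 0`.
-/

open Filter Finset

section
open Real

theorem Real.exp_sub_exp_le_mul_exp_s1 (a b : ℝ) : exp b - exp a ≤ (b - a) * exp b := by
  have h := add_one_le_exp (a - b)
  have h' : exp (a - b) * exp b = exp a := by rw [← exp_add, sub_add_cancel]
  nlinarith [exp_pos b]

theorem Real.log_le_mul_sub_log {x ε : ℝ} (hx : 0 < x) (hε : 0 < ε) :
    log x ≤ ε * x - log ε - 1 := by
  have h := log_le_sub_one_of_pos (mul_pos hε hx)
  rw [log_mul hε.ne' hx.ne'] at h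
  linarith

theorem exp_mul_le_one_add_of_increment_le {Γ : ℕ → ℝ} {θ K : ℝ} (hθ : 0 ≤ θ) (hK : 0 ≤ K)
    (h0 : Γ 0 = 0) (hmono : Monotone Γ)
    (hstep : ∀ n, (Γ (n + 1) - Γ n) * exp (θ * Γ (n + 1)) ≤ K * Γ (n + 1)) (n : ℕ) :
    exp (θ * Γ n) ≤ 1 + θ * K * n * Γ n := by
  induction n with
  | zero => simp [h0]
  | succ n ih =>
    have hexp := exp_sub_exp_le_mul_exp_s1 (θ * Γ n) (θ * Γ (n + 1))
    have hΓ : θ * K * n * Γ n ≤ θ * K * n * Γ (n + 1) := by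
      gcongr
      exact hmono n.le_succ
    have hθstep := mul_le_mul_of_nonneg_left (hstep n) hθ
    push_cast
    linarith

theorem sub_mul_le_of_exp_mul_le {x y θ ε : ℝ} (hε : 0 < ε) (hx : 0 ≤ x)
    (h : exp (θ * x) ≤ y * x) : (θ - ε) * x ≤ log y - log ε - 1 := by
  have hyx : 0 < y * x := (exp_pos _).trans_le h
  have hx' : 0 < x := lt_of_le_of_ne hx fun hx0 => by simp [← hx0] at hyx
  have hy : 0 < y := pos_of_mul_pos_left hyx hx
  have hlog := (le_log_iff_exp_le hyx).mpr h
  rw [log_mul hy.ne' hx'.ne'] at hlog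
  linarith [log_le_mul_sub_log hx' hε]

theorem limsup_div_log_le_of_exp_mul_le {u : ℕ → ℝ} {θ D : ℝ} (hθ : 0 < θ) (hD : 0 < D)
    (hu : ∀ n, 0 ≤ u n) (hexp : ∀ᶠ n in atTop, exp (θ * u n) ≤ D * n * u n) :
    limsup (fun n => u n / log n) atTop ≤ 1 / θ := by
  refine le_of_forall_gt_imp_ge_of_dense fun c hc => ?_
  have hc0 : 0 < c := (one_div_pos.mpr hθ).trans hc
  obtain ⟨θ', hcθ', hθ'⟩ := exists_between ((one_div_lt hθ hc0).mp hc)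
  have hθ'c : 1 < θ' * c := (div_lt_iff₀ hc0).mp hcθ'
  have hlog : Tendsto (fun n : ℕ => log n) atTop atTop :=
    tendsto_log_atTop.comp tendsto_natCast_atTop_atTop
  refine limsup_le_of_le (isCoboundedUnder_le_of_le atTop fun n =>
    div_nonneg (hu n) (log_natCast_nonneg n)) ?_
  filter_upwards [hexp, hlog.eventually_gt_atTop 0, eventually_ge_atTop 1,
    (hlog.const_mul_atTop (sub_pos.mpr hθ'c)).eventually_ge_atTop
      (log D - log (θ - θ') - 1)] with n hn hlogn hn1 hK
  have hbound := sub_mul_le_of_exp_mul_le (sub_pos.mpr hθ') (hu n) hn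
  rw [log_mul hD.ne' (Nat.cast_pos.mpr hn1).ne'] at hbound
  rw [div_le_iff₀ hlogn]
  nlinarith

end

theorem stmt_1_general (γ : ℕ → ℝ) (Γ : ℕ → ℝ)
    (hΓ : ∀ n, Γ n = ∑ k ∈ Finset.Icc 1 n, γ k)
    (hpos : ∀ n, 1 ≤ n → 0 < γ n)
    (θ : ℝ) (hθ : 0 < θ)
    (C : ℝ) (hC : 0 < C) (hO : ∀ n, 1 ≤ n → γ n ≤ C * Γ n * Real.exp (-θ * Γ n)) :
    Filter.limsup (fun n : ℕ => Γ n / Real.log n) atTop ≤ 1 / θ := by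
  have hΓ0 : Γ 0 = 0 := by simp [hΓ]
  have hΓsucc (n : ℕ) : Γ (n + 1) = Γ n + γ (n + 1) := by
    rw [hΓ, hΓ, sum_Icc_succ_top (Nat.le_add_left 1 n)]
  have hΓmono : Monotone Γ := monotone_nat_of_le_succ fun n => by
    linarith [hΓsucc n, hpos (n + 1) n.succ_pos]
  have hΓ1 : 0 < Γ 1 := by simpa [hΓsucc 0, hΓ0] using hpos 1 le_rfl
  have hstep (n : ℕ) : (Γ (n + 1) - Γ n) * Real.exp (θ * Γ (n + 1)) ≤ C * Γ (n + 1) := by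
    have h := hO (n + 1) n.succ_pos
    rw [neg_mul, Real.exp_neg, ← div_eq_mul_inv, le_div_iff₀ (Real.exp_pos _)] at h
    rwa [show Γ (n + 1) - Γ n = γ (n + 1) by linarith [hΓsucc n]]
  set D := 1 / Γ 1 + θ * C
  refine limsup_div_log_le_of_exp_mul_le (D := D) hθ (by positivity)
    (fun n => hΓ0 ▸ hΓmono n.zero_le) ?_
  filter_upwards [eventually_ge_atTop 1] with n hn
  have hnΓ : Γ 1 ≤ n * Γ n := by
    nlinarith [hΓmono hn, (Nat.one_le_cast (α := ℝ)).mpr hn]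
  calc Real.exp (θ * Γ n) ≤ 1 + θ * C * n * Γ n :=
        exp_mul_le_one_add_of_increment_le hθ.le hC.le hΓ0 hΓmono hstep n
    _ ≤ D * n * Γ n := by
        have : 1 ≤ 1 / Γ 1 * (n * Γ n) := by rw [one_div_mul_eq_div, le_div_iff₀ hΓ1]; linarith
        linarith

theorem stmt_1 (γ : ℕ → ℝ) (Γ : ℕ → ℝ)
    (hΓ : ∀ n, Γ n = ∑ k ∈ Finset.Icc 1 n, γ k)
    (hpos : ∀ n, 1 ≤ n → 0 < γ n) (hlt : ∀ n, 1 ≤ n → γ n < 1)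
    (hmono : ∀ n, 1 ≤ n → γ (n + 1) ≤ γ n)
    (htend : Tendsto Γ atTop atTop)
    (θ : ℝ) (hθ : 0 < θ)
    (C : ℝ) (hC : 0 < C) (hO : ∀ n, 1 ≤ n → γ n ≤ C * Γ n * Real.exp (-θ * Γ n)) :
    Filter.limsup (fun n : ℕ => Γ n / Real.log n) atTop ≤ 1 / θ :=
  stmt_1_general γ Γ hΓ hpos θ hθ C hC hO
end

section
/- If (γ_n) is a sequence in (0,1) satisfying γ_n = O(Γ_n e^{-θ Γ_n}) for some θ > 0, where Γ_n = Σ_{k=1}^n γ_k, then Σ_{n=1}^∞ γ_n^2 < ∞. -/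
/-!
Write `γ_{n+1} ≤ C · (Γ_{n+1} e^{-θΓ_{n+1}/2}) · e^{-θΓ_{n+1}/2}`. The middle factor is at most `2/θ`,
and by convexity of `exp`, `γ_{n+1} e^{-θΓ_{n+1}/2} ≤ (2/θ)(e^{-θΓ_n/2} - e^{-θΓ_{n+1}/2})`.
Hence `γ_{n+1}² ≤ (4C/θ²)(e^{-θΓ_n/2} - e^{-θΓ_{n+1}/2})`, and the partial sums of `γ_{n+1}²` telescope
to at most `4C/θ²`.
-/

open Finset Real

lemma summable_of_le_sub_succ {a g : ℕ → ℝ} (ha : ∀ n, 0 ≤ a n) (hg : ∀ n, 0 ≤ g n)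
    (h : ∀ n, a n ≤ g n - g (n + 1)) : Summable a :=
  summable_of_sum_range_le (c := g 0) ha fun n =>
    calc ∑ i ∈ range n, a i ≤ ∑ i ∈ range n, (g i - g (i + 1)) := sum_le_sum fun i _ => h i
      _ = g 0 - g n := sum_range_sub' g n
      _ ≤ g 0 := sub_le_self _ (hg n)

lemma mul_exp_neg_mul_le_inv {c : ℝ} (hc : 0 < c) (x : ℝ) : x * exp (-(c * x)) ≤ c⁻¹ := by
  rw [inv_eq_one_div, le_div_iff₀ hc, mul_right_comm, mul_comm x]
  calc c * x * exp (-(c * x)) ≤ exp (c * x) * exp (-(c * x)) := by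
        gcongr
        linarith [add_one_le_exp (c * x)]
    _ = 1 := by rw [← exp_add, add_neg_cancel, exp_zero]

lemma sub_mul_exp_le_exp_sub_exp (a b : ℝ) : (b - a) * exp a ≤ exp b - exp a := by
  have h := mul_le_mul_of_nonneg_left (add_one_le_exp (b - a)) (exp_pos a).le
  rw [← exp_add, add_sub_cancel] at h
  linarith

lemma sq_le_of_le_mul_exp_neg {θ C x g : ℝ} (hθ : 0 < θ) (hC : 0 ≤ C) (hg : 0 ≤ g)
    (h : g ≤ C * (x + g) * exp (-θ * (x + g))) :
    g ^ 2 ≤ 4 * C / θ ^ 2 * (exp (-(θ / 2 * x)) - exp (-(θ / 2 * (x + g)))) := by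
  set y := x + g
  set E := exp (-(θ / 2 * y))
  have hsplit : exp (-θ * y) = E * E := by rw [← exp_add]; ring_nf
  have hyE : y * E ≤ 2 / θ := by
    simpa using mul_exp_neg_mul_le_inv (half_pos hθ) y
  have hgE : θ / 2 * g * E ≤ exp (-(θ / 2 * x)) - E := by
    convert sub_mul_exp_le_exp_sub_exp (-(θ / 2 * y)) (-(θ / 2 * x)) using 2
    ring
  calc g ^ 2 ≤ g * (C * y * exp (-θ * y)) := by rw [sq]; exact mul_le_mul_of_nonneg_left h hg
    _ = C * (y * E) * (g * E) := by rw [hsplit]; ring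
    _ ≤ C * (2 / θ) * (g * E) := by gcongr
    _ = 4 * C / θ ^ 2 * (θ / 2 * g * E) := by field_simp; ring
    _ ≤ 4 * C / θ ^ 2 * (exp (-(θ / 2 * x)) - E) := by gcongr

theorem stmt_2_general (γ : ℕ → ℝ) (Γ : ℕ → ℝ)
    (hΓ : ∀ n, Γ n = ∑ k ∈ Finset.Icc 1 n, γ k)
    (hpos : ∀ n, 1 ≤ n → 0 < γ n)
    (θ : ℝ) (hθ : 0 < θ)
    (C : ℝ) (hC : 0 < C) (hO : ∀ n, 1 ≤ n → γ n ≤ C * Γ n * Real.exp (-θ * Γ n)) :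
    Summable (fun n : ℕ => (γ (n + 1)) ^ 2) := by
  have hΓsucc : ∀ n, Γ (n + 1) = Γ n + γ (n + 1) := fun n => by
    rw [hΓ, hΓ n, sum_Icc_succ_top (Nat.le_add_left 1 n)]
  refine summable_of_le_sub_succ (g := fun n => 4 * C / θ ^ 2 * exp (-(θ / 2 * Γ n)))
    (fun n => sq_nonneg _) (fun n => by positivity) fun n => ?_
  have hstep := hO (n + 1) (Nat.le_add_left 1 n)
  rw [hΓsucc] at hstep ⊢
  rw [← mul_sub]
  exact sq_le_of_le_mul_exp_neg hθ hC.le (hpos (n + 1) (Nat.le_add_left 1 n)).le hstep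

theorem stmt_2 (γ : ℕ → ℝ) (Γ : ℕ → ℝ)
    (hΓ : ∀ n, Γ n = ∑ k ∈ Finset.Icc 1 n, γ k)
    (hpos : ∀ n, 1 ≤ n → 0 < γ n) (hlt : ∀ n, 1 ≤ n → γ n < 1)
    (θ : ℝ) (hθ : 0 < θ)
    (C : ℝ) (hC : 0 < C) (hO : ∀ n, 1 ≤ n → γ n ≤ C * Γ n * Real.exp (-θ * Γ n)) :
    Summable (fun n : ℕ => (γ (n + 1)) ^ 2) :=
  stmt_2_general γ Γ hΓ hpos θ hθ C hC hO
end

section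
/- Let f(x) = x(1-x). If (X_n) is a sequence in [0,1] such that for each n, X_{n+1} equals X_n, or X_n + γ_{n+1}(1-X_n), or (1-γ_{n+1})X_n, with γ_{n+1} ∈ (0,1), then f(X_{n+1}) ≥ (1-γ_{n+1}) f(X_n); consequently the sequence (S_n f(X_n))_{n≥0} with S_n = ∏_{k=1}^n (1-γ_k)^{-1} is nondecreasing. -/
open Finset

/-! Each move replaces `x` by a barycentre `(1 - γ) x + γ a` with `a ∈ {0, 1}`, or leaves it
fixed; since `f(x) = x(1 - x)` is concave and vanishes at `0` and `1`, concavity gives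
`f((1 - γ) x + γ a) ≥ (1 - γ) f(x)`, and trivially `f(x) ≥ (1 - γ) f(x)` as `f ≥ 0` on `[0, 1]`.
Multiplying by `S_{n+1} = S_n / (1 - γ_{n+1})` turns this into `S_n f(X_n) ≤ S_{n+1} f(X_{n+1})`. -/

theorem ConcaveOn.one_sub_mul_le_apply_of_nonneg {s : Set ℝ} {g : ℝ → ℝ} (hg : ConcaveOn ℝ s g)
    {a x t : ℝ} (ha : a ∈ s) (hga : 0 ≤ g a) (hx : x ∈ s) (ht₀ : 0 ≤ t) (ht₁ : t ≤ 1) :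
    (1 - t) * g x ≤ g ((1 - t) * x + t * a) := by
  have h := hg.2 hx ha (sub_nonneg.mpr ht₁) ht₀ (sub_add_cancel 1 t)
  simp only [smul_eq_mul] at h
  linarith [mul_nonneg ht₀ hga]

theorem concaveOn_mul_one_sub : ConcaveOn ℝ Set.univ (fun x : ℝ => x * (1 - x)) := by
  have h : ConcaveOn ℝ Set.univ (fun x : ℝ => x + -x ^ 2) :=
    (concaveOn_id convex_univ).add (even_two.convexOn_pow).neg
  convert h using 2 with x
  ring

theorem one_sub_mul_le_of_step {γ x y : ℝ} (hγ₀ : 0 ≤ γ) (hγ₁ : γ ≤ 1) (hx₀ : 0 ≤ x)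
    (hx₁ : x ≤ 1) (hy : y = x ∨ y = x + γ * (1 - x) ∨ y = (1 - γ) * x) :
    (1 - γ) * (x * (1 - x)) ≤ y * (1 - y) := by
  have hconc := concaveOn_mul_one_sub
  rcases hy with rfl | rfl | rfl
  · exact mul_le_of_le_one_left (mul_nonneg hx₀ (sub_nonneg.mpr hx₁)) (by linarith)
  · have h := hconc.one_sub_mul_le_apply_of_nonneg (a := 1) (x := x) trivial (by norm_num) trivial
      hγ₀ hγ₁
    convert h using 2 <;> ring
  · have h := hconc.one_sub_mul_le_apply_of_nonneg (a := 0) (x := x) trivial (by norm_num) trivial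
      hγ₀ hγ₁
    simpa using h

theorem inv_prod_mul_le_inv_prod_succ_mul {γ a : ℕ → ℝ} (hlt : ∀ n, 1 ≤ n → γ n < 1) {n : ℕ}
    (h : (1 - γ (n + 1)) * a n ≤ a (n + 1)) :
    (∏ k ∈ Icc 1 n, (1 - γ k))⁻¹ * a n ≤ (∏ k ∈ Icc 1 (n + 1), (1 - γ k))⁻¹ * a (n + 1) := by
  have hc : 0 < 1 - γ (n + 1) := sub_pos.mpr (hlt _ le_add_self)
  have hP : 0 < ∏ k ∈ Icc 1 n, (1 - γ k) :=
    prod_pos fun k hk => sub_pos.mpr (hlt k (mem_Icc.mp hk).1)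
  rw [prod_Icc_succ_top (by omega)]
  set P := ∏ k ∈ Icc 1 n, (1 - γ k)
  calc P⁻¹ * a n = (P * (1 - γ (n + 1)))⁻¹ * ((1 - γ (n + 1)) * a n) := by field_simp
    _ ≤ (P * (1 - γ (n + 1)))⁻¹ * a (n + 1) := by gcongr

theorem stmt_8 (γ : ℕ → ℝ) (X : ℕ → ℝ) (f : ℝ → ℝ) (S : ℕ → ℝ)
    (hf : ∀ x, f x = x * (1 - x))
    (hS : ∀ n, S n = (∏ k ∈ Finset.Icc 1 n, (1 - γ k))⁻¹)
    (hpos : ∀ n, 1 ≤ n → 0 < γ n) (hlt : ∀ n, 1 ≤ n → γ n < 1)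
    (hX : ∀ n, 0 ≤ X n ∧ X n ≤ 1)
    (hstep : ∀ n, X (n + 1) = X n ∨ X (n + 1) = X n + γ (n + 1) * (1 - X n) ∨
      X (n + 1) = (1 - γ (n + 1)) * X n) :
    (∀ n, (1 - γ (n + 1)) * f (X n) ≤ f (X (n + 1))) ∧
    (∀ n, S n * f (X n) ≤ S (n + 1) * f (X (n + 1))) := by
  have step (n : ℕ) : (1 - γ (n + 1)) * f (X n) ≤ f (X (n + 1)) := by
    rw [hf, hf]
    exact one_sub_mul_le_of_step (hpos _ le_add_self).le (hlt _ le_add_self).le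
      (hX n).1 (hX n).2 (hstep n)
  refine ⟨step, fun n => ?_⟩
  rw [hS, hS]
  exact inv_prod_mul_le_inv_prod_succ_mul (a := fun n => f (X n)) hlt (step n)
end

section
/- Under conditions (S) and (E2), for ℓ ∈ {A,B}, the series Σ_{k=1}^n (γ_k/Γ_k)(η_{ℓ,k} − θ_ℓ) converges to a finite limit as n → ∞. -/
/-!
Put `a k = γ k / Γ k`. Since `γ` is nonincreasing, `Γ k ≥ k γ k`, so `a k ≤ 1 / k`, and `a` is
nonincreasing. Summation by parts writes `∑ a k x k` as `a n S n + ∑ (a k - a (k+1)) S (k+1)`,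
where `S` are the partial sums of `x`; the first term is `O(R n / n) → 0`. By (E2),
eventually `|S n| ≤ n / L n` with `L n = log (n+2) ^ (1+ε)`, and a second summation by parts
bounds the partial sums of `∑ (a k - a (k+1)) (k+1) / L (k+1)` by `∑ 1 / ((k+1) L k)`, a
convergent Bertrand series (Cauchy condensation).
-/

open Finset Filter Topology

namespace Real

lemma summable_one_div_nat_mul_log_rpow {p : ℝ} (hp : 1 < p) :
    Summable fun n : ℕ => 1 / (n * log n ^ p) := by
  have hcond : (fun k : ℕ => (2 : ℝ) ^ k * (1 / (((2 ^ k : ℕ) : ℝ) * log ((2 ^ k : ℕ) : ℝ) ^ p))) =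
      fun k : ℕ => (log 2 ^ p)⁻¹ * (1 / (k : ℝ) ^ p) := by
    funext k
    rw [Nat.cast_pow, Nat.cast_ofNat, log_pow, mul_rpow (Nat.cast_nonneg k) (log_nonneg one_le_two),
      mul_one_div, ← div_div, div_self (by positivity)]
    ring
  rw [← summable_condensed_iff_of_eventually_nonneg, hcond]
  · exact (summable_one_div_nat_rpow.mpr hp).mul_left _
  · filter_upwards with n
    positivity
  · filter_upwards [eventually_ge_atTop 2] with n hn
    have hn : (2 : ℝ) ≤ n := by exact_mod_cast hn
    have hlog : 0 < log n := log_pos (by linarith)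
    push_cast
    gcongr <;> linarith

end Real

lemma Finset.sum_Icc_one_eq_sum_range {M : Type*} [AddCommMonoid M] (f : ℕ → M) (n : ℕ) :
    ∑ k ∈ Icc 1 n, f k = ∑ k ∈ range n, f (k + 1) := by
  rw [← Ico_add_one_right_eq_Icc, sum_Ico_eq_sum_range, add_tsub_cancel_right]
  simp only [add_comm]

lemma sum_range_mul_eq_by_parts (a x : ℕ → ℝ) (n : ℕ) :
    ∑ k ∈ range n, a k * x k =
      a n * ∑ i ∈ range n, x i + ∑ k ∈ range n, (a k - a (k + 1)) * ∑ i ∈ range (k + 1), x i := by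
  induction n with
  | zero => simp
  | succ n ih =>
    rw [sum_range_succ (fun k => a k * x k), ih,
      sum_range_succ (fun k => (a k - a (k + 1)) * ∑ i ∈ range (k + 1), x i), sum_range_succ x n]
    ring

lemma exists_tendsto_sum_range_mul_of_summable {a x : ℕ → ℝ}
    (hsum : Summable fun k => (a k - a (k + 1)) * ∑ i ∈ range (k + 1), x i)
    (hlim : Tendsto (fun n => a n * ∑ i ∈ range n, x i) atTop (𝓝 0)) :
    ∃ l, Tendsto (fun n => ∑ k ∈ range n, a k * x k) atTop (𝓝 l) :=
  ⟨_, (hlim.add hsum.hasSum.tendsto_sum_nat).congr fun n => (sum_range_mul_eq_by_parts a x n).symm⟩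

lemma summable_sub_mul_of_mul_sub_le {a b w : ℕ → ℝ} (ha : Antitone a) (ha0 : ∀ n, 0 ≤ a n)
    (hb0 : ∀ n, 0 ≤ b n) (hw : Summable w) (hw0 : ∀ n, 0 ≤ w n)
    (hab : ∀ k, a k * (b (k + 1) - b k) ≤ w k) :
    Summable fun k => (a k - a (k + 1)) * b (k + 1) := by
  have hparts : ∀ n, ∑ k ∈ range n, (a k - a (k + 1)) * b (k + 1) =
      a 0 * b 0 - a n * b n + ∑ k ∈ range n, a k * (b (k + 1) - b k) := by
    intro n
    induction n with
    | zero => simp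
    | succ n ih =>
      rw [sum_range_succ, sum_range_succ, ih]
      ring
  refine summable_of_sum_range_le (c := a 0 * b 0 + ∑' k, w k)
    (fun k => mul_nonneg (sub_nonneg.2 (ha k.le_succ)) (hb0 _)) fun n => ?_
  rw [hparts]
  linarith [mul_nonneg (ha0 n) (hb0 n), sum_le_sum fun k (_ : k ∈ range n) => hab k,
    hw.sum_le_tsum (range n) fun k _ => hw0 k]

lemma tendsto_div_natCast_of_tendsto_mul_div {R L : ℕ → ℝ} (hR0 : ∀ n, 0 ≤ R n)
    (hL : Monotone L) (hL0 : 0 < L 0) (hR : Tendsto (fun n : ℕ => R n * L n / n) atTop (𝓝 0)) :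
    Tendsto (fun n : ℕ => R n / n) atTop (𝓝 0) := by
  refine squeeze_zero (fun n => div_nonneg (hR0 n) n.cast_nonneg) (fun n => ?_)
    (by simpa using hR.div_const (L 0))
  calc R n / n ≤ R n / n * (L n / L 0) :=
        le_mul_of_one_le_right (div_nonneg (hR0 n) n.cast_nonneg)
          ((one_le_div hL0).2 (hL n.zero_le))
    _ = R n * L n / n / L 0 := by ring

lemma eventually_le_div_of_tendsto_mul_div {R L : ℕ → ℝ} (hL : ∀ n, 0 < L n)
    (hR : Tendsto (fun n : ℕ => R n * L n / n) atTop (𝓝 0)) :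
    ∀ᶠ n : ℕ in atTop, R n ≤ n / L n := by
  filter_upwards [hR.eventually_lt_const one_pos, eventually_ge_atTop 1] with n hlt hn
  rw [le_div_iff₀ (hL n)]
  exact ((div_lt_one (by exact_mod_cast hn)).1 hlt).le

lemma succ_div_sub_div_le {L : ℕ → ℝ} (hL : Monotone L) (hLpos : ∀ n, 0 < L n) (k : ℕ) :
    ((k + 1 : ℕ) : ℝ) / L (k + 1) - k / L k ≤ 1 / L k :=
  calc ((k + 1 : ℕ) : ℝ) / L (k + 1) - k / L k ≤ (k + 1 : ℕ) / L k - k / L k := by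
        gcongr
        · exact hLpos k
        · exact hL k.le_succ
    _ = 1 / L k := by push_cast; ring

theorem exists_tendsto_sum_range_mul {a x R L : ℕ → ℝ} (ha : Antitone a) (ha0 : ∀ n, 0 ≤ a n)
    (ha_le : ∀ n, a n ≤ 1 / (n + 1)) (hL : Monotone L) (hL0 : 0 < L 0)
    (hw : Summable fun k : ℕ => 1 / ((k + 1) * L k))
    (hS : ∀ n, |∑ i ∈ range n, x i| ≤ R n)
    (hR : Tendsto (fun n : ℕ => R n * L n / n) atTop (𝓝 0)) :
    ∃ l, Tendsto (fun n => ∑ k ∈ range n, a k * x k) atTop (𝓝 l) := by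
  have hLpos : ∀ n, 0 < L n := fun n => hL0.trans_le (hL n.zero_le)
  have hR0 : ∀ n, 0 ≤ R n := fun n => (abs_nonneg _).trans (hS n)
  have hstep : ∀ k, a k * ((k + 1 : ℕ) / L (k + 1) - k / L k) ≤ 1 / ((k + 1) * L k) := fun k =>
    calc a k * ((k + 1 : ℕ) / L (k + 1) - k / L k) ≤ a k * (1 / L k) :=
          mul_le_mul_of_nonneg_left (succ_div_sub_div_le hL hLpos k) (ha0 k)
      _ ≤ 1 / (k + 1) * (1 / L k) :=
          mul_le_mul_of_nonneg_right (ha_le k) (one_div_pos.2 (hLpos k)).le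
      _ = 1 / ((k + 1) * L k) := one_div_mul_one_div _ _
  have hsum : Summable fun k => (a k - a (k + 1)) * ((k + 1 : ℕ) / L (k + 1)) :=
    summable_sub_mul_of_mul_sub_le (b := fun n => n / L n) ha ha0
      (fun n => div_nonneg n.cast_nonneg (hLpos n).le) hw
      (fun k => one_div_nonneg.2 (mul_nonneg (by positivity) (hLpos k).le)) hstep
  refine exists_tendsto_sum_range_mul_of_summable (hsum.of_norm_bounded_eventually_nat ?_) ?_
  · filter_upwards [(tendsto_add_atTop_nat 1).eventually
      (eventually_le_div_of_tendsto_mul_div hLpos hR)] with k hk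
    rw [Real.norm_eq_abs, abs_mul, abs_of_nonneg (sub_nonneg.2 (ha k.le_succ))]
    exact mul_le_mul_of_nonneg_left ((hS _).trans hk) (sub_nonneg.2 (ha k.le_succ))
  · refine squeeze_zero_norm' ?_ (tendsto_div_natCast_of_tendsto_mul_div hR0 hL hL0 hR)
    filter_upwards [eventually_ge_atTop 1] with n hn
    have hn : (1 : ℝ) ≤ n := by exact_mod_cast hn
    calc ‖a n * ∑ i ∈ range n, x i‖ = a n * |∑ i ∈ range n, x i| := by
          rw [norm_mul, Real.norm_of_nonneg (ha0 n), Real.norm_eq_abs]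
      _ ≤ 1 / (n + 1) * R n := mul_le_mul (ha_le n) (hS n) (abs_nonneg _) (by positivity)
      _ ≤ R n / n := by
          rw [one_div_mul_eq_div]
          exact div_le_div_of_nonneg_left (hR0 n) (by linarith) (by linarith)

section StepSizes

variable {g : ℕ → ℝ}

lemma antitone_div_sum_range_succ (hg : Antitone g) (hpos : ∀ n, 0 < g n) :
    Antitone fun n => g n / ∑ i ∈ range (n + 1), g i := by
  refine antitone_nat_of_succ_le fun n => ?_
  rw [sum_range_succ _ (n + 1)]
  exact div_le_div₀ (hpos n).le (hg n.le_succ)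
    (sum_pos (fun i _ => hpos i) nonempty_range_add_one) (le_add_of_nonneg_right (hpos _).le)

lemma div_sum_range_succ_le (hg : Antitone g) (hpos : ∀ n, 0 < g n) (n : ℕ) :
    g n / ∑ i ∈ range (n + 1), g i ≤ 1 / (n + 1) := by
  rw [div_le_div_iff₀ (sum_pos (fun i _ => hpos i) nonempty_range_add_one) (by positivity),
    one_mul]
  calc g n * (n + 1) = ∑ _i ∈ range (n + 1), g n := by simp [mul_comm]
    _ ≤ ∑ i ∈ range (n + 1), g i := sum_le_sum fun i hi => hg (Nat.lt_succ_iff.1 (mem_range.1 hi))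

end StepSizes

lemma monotone_log_nat_add_two_rpow {p : ℝ} (hp : 0 ≤ p) :
    Monotone fun n : ℕ => Real.log (n + 2) ^ p := by
  refine monotone_nat_of_le_succ fun n => ?_
  have hn : (0 : ℝ) ≤ n := n.cast_nonneg
  push_cast
  gcongr
  · exact Real.log_nonneg (by linarith)
  · linarith

lemma summable_one_div_nat_add_one_mul_log_rpow {p : ℝ} (hp : 1 < p) :
    Summable fun k : ℕ => 1 / ((k + 1) * Real.log (k + 2) ^ p) := by
  refine ((summable_nat_add_iff 1).2 (Real.summable_one_div_nat_mul_log_rpow hp))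
    |>.of_norm_bounded_eventually_nat ?_
  filter_upwards [eventually_ge_atTop 1] with k hk
  have hk : (1 : ℝ) ≤ k := by exact_mod_cast hk
  have hlog : 0 < Real.log (k + 1) := Real.log_pos (by linarith)
  have hle : Real.log (k + 1) ≤ Real.log (k + 2) := Real.log_le_log (by linarith) (by linarith)
  have hpow : 0 ≤ Real.log (k + 2) ^ p := Real.rpow_nonneg (hlog.le.trans hle) _
  rw [Real.norm_of_nonneg (one_div_nonneg.2 (mul_nonneg (by positivity) hpow)), Nat.cast_add_one]
  exact one_div_le_one_div_of_le (by positivity)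
    (mul_le_mul_of_nonneg_left (Real.rpow_le_rpow hlog.le hle (by linarith)) (by positivity))

theorem exists_tendsto_sum_Icc_div_mul {γ Γ x R : ℕ → ℝ} {ε : ℝ} (hε : 0 < ε)
    (hΓ : ∀ n, Γ n = ∑ k ∈ Icc 1 n, γ k) (hpos : ∀ n, 1 ≤ n → 0 < γ n)
    (hmono : ∀ n, 1 ≤ n → γ (n + 1) ≤ γ n) (hS : ∀ n, |∑ i ∈ Icc 1 n, x i| ≤ R n)
    (hR : Tendsto (fun n : ℕ => R n * Real.log (n + 2) ^ (1 + ε) / n) atTop (𝓝 0)) :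
    ∃ l, Tendsto (fun n => ∑ k ∈ Icc 1 n, γ k / Γ k * x k) atTop (𝓝 l) := by
  have hg : Antitone fun n => γ (n + 1) :=
    antitone_nat_of_succ_le fun n => hmono (n + 1) le_add_self
  have hgpos : ∀ n, 0 < γ (n + 1) := fun n => hpos (n + 1) le_add_self
  have hΓg : ∀ n, Γ (n + 1) = ∑ i ∈ range (n + 1), γ (i + 1) := fun n => by
    rw [hΓ, sum_Icc_one_eq_sum_range]
  simp only [sum_Icc_one_eq_sum_range, hΓg] at hS ⊢
  exact exists_tendsto_sum_range_mul (antitone_div_sum_range_succ hg hgpos)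
    (fun n => div_nonneg (hgpos n).le (sum_nonneg fun i _ => (hgpos i).le))
    (div_sum_range_succ_le hg hgpos) (monotone_log_nat_add_two_rpow (by linarith)) (by positivity)
    (summable_one_div_nat_add_one_mul_log_rpow (by linarith)) hS hR

theorem stmt_14_general (γ Γ : ℕ → ℝ) (ηA ηB : ℕ → ℝ) (θA θB : ℝ) (R : ℕ → ℝ) (ε : ℝ)
    (hΓ : ∀ n, Γ n = ∑ k ∈ Finset.Icc 1 n, γ k)
    (hpos : ∀ n, 1 ≤ n → 0 < γ n)
    (hmono : ∀ n, 1 ≤ n → γ (n + 1) ≤ γ n)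
    (hR : ∀ n, R n = max |∑ i ∈ Finset.Icc 1 n, (ηA i - θA)|
                         |∑ i ∈ Finset.Icc 1 n, (ηB i - θB)|)
    (hε : 0 < ε)
    (hE2 : Tendsto (fun n : ℕ => R n * (Real.log (n + 2)) ^ (1 + ε) / n) atTop (nhds 0)) :
    (∃ LA : ℝ, Tendsto (fun n => ∑ k ∈ Finset.Icc 1 n, γ k / Γ k * (ηA k - θA)) atTop (nhds LA)) ∧
    (∃ LB : ℝ, Tendsto (fun n => ∑ k ∈ Finset.Icc 1 n, γ k / Γ k * (ηB k - θB)) atTop (nhds LB)) :=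
  ⟨exists_tendsto_sum_Icc_div_mul hε hΓ hpos hmono (fun n => hR n ▸ le_max_left _ _) hE2,
    exists_tendsto_sum_Icc_div_mul hε hΓ hpos hmono (fun n => hR n ▸ le_max_right _ _) hE2⟩

theorem stmt_14 (γ Γ : ℕ → ℝ) (ηA ηB : ℕ → ℝ) (θA θB : ℝ) (R : ℕ → ℝ) (ε C : ℝ)
    (hΓ : ∀ n, Γ n = ∑ k ∈ Finset.Icc 1 n, γ k)
    (hpos : ∀ n, 1 ≤ n → 0 < γ n) (hlt : ∀ n, 1 ≤ n → γ n < 1)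
    (hmono : ∀ n, 1 ≤ n → γ (n + 1) ≤ γ n)
    (htend : Tendsto Γ atTop atTop)
    (hC : 0 < C) (hO : ∀ n, 1 ≤ n → γ n ≤ C * Γ n * Real.exp (-θB * Γ n))
    (hηA : ∀ k, ηA k = 0 ∨ ηA k = 1) (hηB : ∀ k, ηB k = 0 ∨ ηB k = 1)
    (hθA : θA ∈ Set.Ioo (0:ℝ) 1) (hθB : θB ∈ Set.Ioo (0:ℝ) 1)
    (hR : ∀ n, R n = max |∑ i ∈ Finset.Icc 1 n, (ηA i - θA)|
                         |∑ i ∈ Finset.Icc 1 n, (ηB i - θB)|)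
    (hε : 0 < ε)
    (hE2 : Tendsto (fun n : ℕ => R n * (Real.log (n + 2)) ^ (1 + ε) / n) atTop (nhds 0)) :
    (∃ LA : ℝ, Tendsto (fun n => ∑ k ∈ Finset.Icc 1 n, γ k / Γ k * (ηA k - θA)) atTop (nhds LA)) ∧
    (∃ LB : ℝ, Tendsto (fun n => ∑ k ∈ Finset.Icc 1 n, γ k / Γ k * (ηB k - θB)) atTop (nhds LB)) :=
  stmt_14_general γ Γ ηA ηB θA θB R ε hΓ hpos hmono hR hε hE2
end

section
/- Lemma (1sumest): assume (γ_n) nonincreasing in (0,1) and φ nondecreasing concave on [k_0,∞). Define Ψ_n = Σ_{k=n+1}^∞ (γ_k/S_{k-1})(η_{A,k} − η_{B,k} − (θ_A − θ_B)) and β_n = sup_{k≥n} R_k/φ(k) where R_k = max_ℓ |Σ_{i=1}^k (η_{ℓ,i} − θ_ℓ)|. Then for all n ≥ k_0, |Ψ_n| ≤ (2β_n/S_{n-1})(φ'(n) + 2γ_n φ(n)), with φ'(n) = φ(n) − φ(n−1). -/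
open Finset

/-!
With `a k = γ_{n+1+k} / S_{n+k} = 1/S_{n+k} - 1/S_{n+k+1}` and `D m` the difference of the two
centred partial sums, the terms of `Ψ_n` are `a k (D_{n+k+1} - D_{n+k})`. Summation by parts moves
the difference onto the nonnegative, nonincreasing weights `a`, and `|D_m| ≤ 2 β_n φ(m)` for
`m ≥ n`. Summing by parts once more, now against `φ`, the boundary terms `a_N φ(n+N)` cancel and
only `Σ a_k (φ(n+k+1) - φ(n+k))` is left, which concavity bounds by
`(φ(n+1) - φ(n)) Σ a_k ≤ (φ(n+1) - φ(n)) / S_n`. Finally `γ_{n+1} ≤ γ_n`, `S_{n-1} ≤ S_n` and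
concavity once more pass from index `n` to `n - 1`; if `β_n < 0` then `φ(n) = 0` and the bound is
trivial.
-/

theorem sum_range_mul_sub_eq {R : Type*} [CommRing R] (a T : ℕ → R) (N : ℕ) :
    ∑ k ∈ range N, a k * (T (k + 1) - T k) =
      a N * T N - a 0 * T 0 + ∑ k ∈ range N, (a k - a (k + 1)) * T (k + 1) := by
  induction N with
  | zero => simp
  | succ N ih => rw [sum_range_succ, ih, sum_range_succ]; ring

theorem abs_sum_range_mul_sub_le {a T φ : ℕ → ℝ} {c : ℝ} (ha : Antitone a)
    (ha₀ : ∀ k, 0 ≤ a k) (hT : ∀ k, |T k| ≤ c * φ k) (N : ℕ) :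
    |∑ k ∈ range N, a k * (T (k + 1) - T k)| ≤
      c * (2 * a 0 * φ 0 + ∑ k ∈ range N, a k * (φ (k + 1) - φ k)) := by
  have hweighted : ∀ k, |a k * T k| ≤ c * (a k * φ k) := fun k => by
    rw [abs_mul, abs_of_nonneg (ha₀ k), mul_left_comm]
    exact mul_le_mul_of_nonneg_left (hT k) (ha₀ k)
  have hinner : |∑ k ∈ range N, (a k - a (k + 1)) * T (k + 1)| ≤
      c * ∑ k ∈ range N, (a k - a (k + 1)) * φ (k + 1) := by
    rw [mul_sum]
    refine (abs_sum_le_sum_abs _ _).trans (sum_le_sum fun k _ => ?_)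
    have hdiff : 0 ≤ a k - a (k + 1) := sub_nonneg.2 (ha k.le_succ)
    rw [abs_mul, abs_of_nonneg hdiff, mul_left_comm]
    exact mul_le_mul_of_nonneg_left (hT _) hdiff
  rw [sum_range_mul_sub_eq, sum_range_mul_sub_eq a φ]
  have hN := hweighted N
  have h₀ := hweighted 0
  have htri := abs_add_le (a N * T N - a 0 * T 0) (∑ k ∈ range N, (a k - a (k + 1)) * T (k + 1))
  have hsub := abs_sub (a N * T N) (a 0 * T 0)
  linarith

/-- When the series diverges, `tsum` is `0` and the bound is the case `N = 0` of the partial sums. -/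
theorem abs_tsum_mul_sub_le {a T φ : ℕ → ℝ} {c δ B : ℝ} (ha : Antitone a) (ha₀ : ∀ k, 0 ≤ a k)
    (hc : 0 ≤ c) (hδ : 0 ≤ δ) (hT : ∀ k, |T k| ≤ c * φ k) (hφ : ∀ k, φ (k + 1) - φ k ≤ δ)
    (hB : ∀ N, ∑ k ∈ range N, a k ≤ B) :
    |∑' k, a k * (T (k + 1) - T k)| ≤ c * (2 * a 0 * φ 0 + δ * B) := by
  have hpartial : ∀ N, |∑ k ∈ range N, a k * (T (k + 1) - T k)| ≤ c * (2 * a 0 * φ 0 + δ * B) := by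
    intro N
    refine (abs_sum_range_mul_sub_le ha ha₀ hT N).trans (mul_le_mul_of_nonneg_left ?_ hc)
    calc 2 * a 0 * φ 0 + ∑ k ∈ range N, a k * (φ (k + 1) - φ k)
        ≤ 2 * a 0 * φ 0 + ∑ k ∈ range N, δ * a k := by
          gcongr 2 * a 0 * φ 0 + ?_
          exact sum_le_sum fun k _ => by
            rw [mul_comm δ]; exact mul_le_mul_of_nonneg_left (hφ k) (ha₀ k)
      _ ≤ 2 * a 0 * φ 0 + δ * B := by rw [← mul_sum]; gcongr; exact hB N
  by_cases hs : Summable fun k => a k * (T (k + 1) - T k)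
  · exact le_of_tendsto' hs.hasSum.tendsto_sum_nat.abs hpartial
  · simpa [tsum_eq_zero_of_not_summable hs] using hpartial 0

theorem abs_sub_le_two_mul_max_abs {α : Type*} [Ring α] [LinearOrder α] [IsOrderedRing α]
    (x y : α) : |x - y| ≤ 2 * max |x| |y| :=
  (abs_sub x y).trans (two_mul (max |x| |y|) ▸ add_le_add (le_max_left _ _) (le_max_right _ _))

theorem succ_sub_le_succ_sub_of_concave {φ : ℕ → ℝ} {k₀ n m : ℕ}
    (hφ : ∀ k, k₀ ≤ k → φ (k + 1) - φ k ≤ φ k - φ (k - 1)) (hn : k₀ ≤ n) (hnm : n ≤ m) :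
    φ (m + 1) - φ m ≤ φ (n + 1) - φ n := by
  induction m, hnm using Nat.le_induction with
  | base => exact le_rfl
  | succ m hnm ih => exact (hφ (m + 1) (by omega)).trans ih

noncomputable def prodOneSub (γ : ℕ → ℝ) (m : ℕ) : ℝ := ∏ k ∈ Icc 1 m, (1 - γ k)

section prodOneSub

variable {γ : ℕ → ℝ}

theorem prodOneSub_succ (γ : ℕ → ℝ) (m : ℕ) :
    prodOneSub γ (m + 1) = prodOneSub γ m * (1 - γ (m + 1)) :=
  prod_Icc_succ_top (Nat.le_add_left 1 m) _

theorem prodOneSub_pos (hγ : ∀ k, 1 ≤ k → γ k < 1) (m : ℕ) : 0 < prodOneSub γ m :=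
  prod_pos fun k hk => sub_pos.2 (hγ k (mem_Icc.1 hk).1)

theorem prodOneSub_succ_le (hγ₀ : ∀ k, 1 ≤ k → 0 ≤ γ k) (hγ₁ : ∀ k, 1 ≤ k → γ k < 1) (m : ℕ) :
    prodOneSub γ (m + 1) ≤ prodOneSub γ m := by
  rw [prodOneSub_succ]
  have := prodOneSub_pos hγ₁ m
  nlinarith [hγ₀ (m + 1) (Nat.le_add_left 1 m)]

theorem sum_range_mul_prodOneSub (γ : ℕ → ℝ) (n N : ℕ) :
    ∑ k ∈ range N, γ (n + 1 + k) * prodOneSub γ (n + k) = prodOneSub γ n - prodOneSub γ (n + N) := by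
  induction N with
  | zero => simp
  | succ N ih =>
    rw [sum_range_succ, ih, ← add_assoc, prodOneSub_succ, add_right_comm]
    ring

theorem sum_range_mul_prodOneSub_le (hγ : ∀ k, 1 ≤ k → γ k < 1) (n N : ℕ) :
    ∑ k ∈ range N, γ (n + 1 + k) * prodOneSub γ (n + k) ≤ prodOneSub γ n := by
  rw [sum_range_mul_prodOneSub]
  linarith [prodOneSub_pos hγ (n + N)]

theorem antitone_mul_prodOneSub (hγ₀ : ∀ k, 1 ≤ k → 0 ≤ γ k) (hγ₁ : ∀ k, 1 ≤ k → γ k < 1)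
    (hγ : ∀ k, 1 ≤ k → γ (k + 1) ≤ γ k) (n : ℕ) :
    Antitone fun k => γ (n + 1 + k) * prodOneSub γ (n + k) :=
  antitone_nat_of_succ_le fun k =>
    mul_le_mul (hγ (n + 1 + k) (by omega)) (prodOneSub_succ_le hγ₀ hγ₁ (n + k))
      (prodOneSub_pos hγ₁ _).le (hγ₀ _ (by omega))

theorem max_two_mul_le_two_mul_prodOneSub_pred {φ : ℕ → ℝ} {β : ℝ} {n : ℕ} (hn : 1 ≤ n)
    (hγ₀ : ∀ k, 1 ≤ k → 0 ≤ γ k) (hγ₁ : ∀ k, 1 ≤ k → γ k < 1) (hγ : γ (n + 1) ≤ γ n)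
    (hφ₀ : 0 ≤ φ n) (hφ₁ : 0 ≤ φ (n - 1)) (hφmono : φ n ≤ φ (n + 1))
    (hφconc : φ (n + 1) - φ n ≤ φ n - φ (n - 1)) (hβ : β < 0 → φ n = 0) :
    max (2 * β) 0 * (2 * (γ (n + 1) * prodOneSub γ n) * φ n + (φ (n + 1) - φ n) * prodOneSub γ n)
      ≤ 2 * β * prodOneSub γ (n - 1) * (φ n - φ (n - 1) + 2 * γ n * φ n) := by
  have hpred : prodOneSub γ n ≤ prodOneSub γ (n - 1) := by
    simpa [Nat.sub_add_cancel hn] using prodOneSub_succ_le hγ₀ hγ₁ (n - 1)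
  rcases lt_or_ge β 0 with hneg | hnonneg
  · rw [max_eq_right (by linarith), zero_mul, hβ hneg]
    nlinarith [mul_nonneg (mul_nonneg (neg_nonneg.2 hneg.le) (prodOneSub_pos hγ₁ (n - 1)).le) hφ₁]
  · rw [max_eq_left (by linarith)]
    have hγb : γ (n + 1) * prodOneSub γ n ≤ γ n * prodOneSub γ (n - 1) :=
      mul_le_mul hγ hpred (prodOneSub_pos hγ₁ n).le (hγ₀ n hn)
    have hφb : (φ (n + 1) - φ n) * prodOneSub γ n ≤ (φ n - φ (n - 1)) * prodOneSub γ (n - 1) :=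
      mul_le_mul hφconc hpred (prodOneSub_pos hγ₁ n).le (by linarith)
    calc 2 * β * (2 * (γ (n + 1) * prodOneSub γ n) * φ n + (φ (n + 1) - φ n) * prodOneSub γ n)
        ≤ 2 * β * (2 * (γ n * prodOneSub γ (n - 1)) * φ n
            + (φ n - φ (n - 1)) * prodOneSub γ (n - 1)) := by
          gcongr 2 * β * (2 * ?_ * φ n + ?_)
      _ = 2 * β * prodOneSub γ (n - 1) * (φ n - φ (n - 1) + 2 * γ n * φ n) := by ring

end prodOneSub

theorem stmt_16_general (γ : ℕ → ℝ) (S : ℕ → ℝ) (ηA ηB : ℕ → ℝ) (θA θB : ℝ)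
    (φ : ℕ → ℝ) (R β Ψ : ℕ → ℝ) (k₀ : ℕ)
    (hpos : ∀ n, 1 ≤ n → 0 < γ n) (hlt : ∀ n, 1 ≤ n → γ n < 1)
    (hmono : ∀ n, 1 ≤ n → γ (n + 1) ≤ γ n)
    (hS : ∀ n, S n = (∏ k ∈ Finset.Icc 1 n, (1 - γ k))⁻¹)
    (hφpos : ∀ k, 0 ≤ φ k)
    (hφmono : ∀ k, k₀ ≤ k → φ k ≤ φ (k + 1))
    (hφconc : ∀ k, k₀ ≤ k → φ (k + 1) - φ k ≤ φ k - φ (k - 1))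
    (hR : ∀ n, R n = max |∑ i ∈ Finset.Icc 1 n, (ηA i - θA)|
                         |∑ i ∈ Finset.Icc 1 n, (ηB i - θB)|)
    (hβ : ∀ n k, n ≤ k → R k ≤ β n * φ k)
    (hΨ : ∀ n, Ψ n = ∑' k : ℕ,
      γ (n + 1 + k) / S (n + k) * (ηA (n + 1 + k) - ηB (n + 1 + k) - (θA - θB))) :
    ∀ n, k₀ ≤ n → 1 ≤ n →
      |Ψ n| ≤ 2 * β n / S (n - 1) * ((φ n - φ (n - 1)) + 2 * γ n * φ n) := by
  intro n hk₀ hn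
  have hγ₀ : ∀ k, 1 ≤ k → 0 ≤ γ k := fun k hk => (hpos k hk).le
  have hSb : ∀ m, S m = (prodOneSub γ m)⁻¹ := hS
  set D : ℕ → ℝ := fun m => ∑ i ∈ Icc 1 m, (ηA i - θA) - ∑ i ∈ Icc 1 m, (ηB i - θB)
  have hΨD : Ψ n = ∑' k, γ (n + 1 + k) * prodOneSub γ (n + k) * (D (n + (k + 1)) - D (n + k)) := by
    refine (hΨ n).trans (tsum_congr fun k => ?_)
    rw [hSb, div_inv_eq_mul, show n + 1 + k = n + k + 1 by omega]
    simp only [D, ← add_assoc, sum_Icc_succ_top (Nat.le_add_left 1 (n + k))]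
    ring
  have hD : ∀ k, |D (n + k)| ≤ max (2 * β n) 0 * φ (n + k) := fun k =>
    calc |D (n + k)| ≤ 2 * R (n + k) := (hR _).symm ▸ abs_sub_le_two_mul_max_abs _ _
      _ ≤ 2 * β n * φ (n + k) := by linarith [hβ n (n + k) (Nat.le_add_right n k)]
      _ ≤ max (2 * β n) 0 * φ (n + k) := mul_le_mul_of_nonneg_right (le_max_left _ _) (hφpos _)
  have hφn : β n < 0 → φ n = 0 := fun hneg =>
    have hRn : 0 ≤ R n := (hR n).symm ▸ le_max_of_le_left (abs_nonneg _)
    le_antisymm (nonpos_of_mul_nonneg_right (hRn.trans (hβ n n le_rfl)) hneg) (hφpos n)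
  have hbound := abs_tsum_mul_sub_le (antitone_mul_prodOneSub hγ₀ hlt hmono n)
    (fun k => mul_nonneg (hγ₀ _ (by omega)) (prodOneSub_pos hlt _).le) (le_max_right _ 0)
    (sub_nonneg.2 (hφmono n hk₀)) hD
    (fun k => succ_sub_le_succ_sub_of_concave hφconc hk₀ (Nat.le_add_right n k))
    (sum_range_mul_prodOneSub_le hlt n)
  simp only [add_zero] at hbound
  rw [hΨD, hSb, div_inv_eq_mul]
  exact hbound.trans (max_two_mul_le_two_mul_prodOneSub_pred hn hγ₀ hlt (hmono n hn) (hφpos n)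
    (hφpos (n - 1)) (hφmono n hk₀) (hφconc n hk₀) hφn)

theorem stmt_16 (γ : ℕ → ℝ) (S : ℕ → ℝ) (ηA ηB : ℕ → ℝ) (θA θB : ℝ)
    (φ : ℕ → ℝ) (R β Ψ : ℕ → ℝ) (k₀ : ℕ)
    (hpos : ∀ n, 1 ≤ n → 0 < γ n) (hlt : ∀ n, 1 ≤ n → γ n < 1)
    (hmono : ∀ n, 1 ≤ n → γ (n + 1) ≤ γ n)
    (hS : ∀ n, S n = (∏ k ∈ Finset.Icc 1 n, (1 - γ k))⁻¹)
    (hηA : ∀ k, ηA k = 0 ∨ ηA k = 1) (hηB : ∀ k, ηB k = 0 ∨ ηB k = 1)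
    (hθA : θA ∈ Set.Ioo (0:ℝ) 1) (hθB : θB ∈ Set.Ioo (0:ℝ) 1)
    (hφpos : ∀ k, 0 ≤ φ k)
    (hφmono : ∀ k, k₀ ≤ k → φ k ≤ φ (k + 1))
    (hφconc : ∀ k, k₀ ≤ k → φ (k + 1) - φ k ≤ φ k - φ (k - 1))
    (hR : ∀ n, R n = max |∑ i ∈ Finset.Icc 1 n, (ηA i - θA)|
                         |∑ i ∈ Finset.Icc 1 n, (ηB i - θB)|)
    (hβ : ∀ n k, n ≤ k → R k ≤ β n * φ k)
    (hΨ : ∀ n, Ψ n = ∑' k : ℕ,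
      γ (n + 1 + k) / S (n + k) * (ηA (n + 1 + k) - ηB (n + 1 + k) - (θA - θB))) :
    ∀ n, k₀ ≤ n → 1 ≤ n →
      |Ψ n| ≤ 2 * β n / S (n - 1) * ((φ n - φ (n - 1)) + 2 * γ n * φ n) :=
  stmt_16_general γ S ηA ηB θA θB φ R β Ψ k₀ hpos hlt hmono hS hφpos hφmono hφconc hR hβ hΨ
end

section
/- Lemma (2sumest): under the assumptions of Lemma 1sumest, setting Λ_n = Σ_{k=1}^n γ_k f(X_{k−1})(η_{A,k}−η_{B,k}−(θ_A−θ_B)) with f(x)=x(1−x) and X in [0,1] evolving by the Narendra rule, and R'_n = 2 sup_{k≥n} β_k(φ'(k)+2γ_kφ(k)) / (1−γ_n), one has for all n ≥ m ≥ k_0: |Λ_n − Λ_m| ≤ R'_m (Σ_{k=m+1}^n γ_k f(X_{k−1}) + 2 f(X_n)). -/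
open Finset

/-
With `c k = γ k f(X (k-1))` and `M k` the difference of the two centred cumulative sums,
`Λ n - Λ m = ∑ c k (M k - M (k-1))`. Abel summation moves the differences onto `c`, while
`|M k| ≤ 2 R k ≤ w k := 2 b k φ k`, where `b` is the running minimum of `β` (so `b` is
nonincreasing and still controls `R`). The Narendra update gives
`(1 - γ (k+1)) f(X k) ≤ f(X (k+1))`, i.e. `S k f(X k)` is nondecreasing; hence the increments of `c`
are bounded above by the nonnegative `γ (k+1) (f(X k) - (1 - γ k) f(X (k-1)))`. With
`s k = 2 b k (φ k - φ (k-1))` and `2 γ k w k + s k ≤ D := R' m`, each Abel summand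
`|c k - c (k+1)| w k` is at most `D c k` plus the increment of the potential
`Φ k = (D - s k) f(X k) - c (k+1) w k`. Telescoping and absorbing the boundary terms into `Φ` gives
`|Λ n - Λ m| ≤ R' m (∑ c k + f(X n))`.
-/

theorem sum_Icc_add_one_eq_sum_Ico {M : Type*} [AddCommMonoid M] (g : ℕ → M) (m n : ℕ) :
    ∑ k ∈ Icc (m + 1) n, g k = ∑ j ∈ Ico m n, g (j + 1) := by
  rw [sum_Ico_add', Ico_add_one_right_eq_Icc]

theorem sum_Icc_one_sub_sum_Icc_one {M : Type*} [AddCommGroup M] (g : ℕ → M) {m n : ℕ}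
    (hmn : m ≤ n) : ∑ k ∈ Icc 1 n, g k - ∑ k ∈ Icc 1 m, g k = ∑ j ∈ Ico m n, g (j + 1) := by
  rw [← zero_add 1, sum_Icc_add_one_eq_sum_Ico, sum_Icc_add_one_eq_sum_Ico,
    ← sum_Ico_consecutive _ (Nat.zero_le m) hmn, add_sub_cancel_left]

theorem sum_Ico_mul_sub_eq {R : Type*} [CommRing R] (c M : ℕ → R) {m n : ℕ} (hmn : m ≤ n) :
    ∑ j ∈ Ico m n, c (j + 1) * (M (j + 1) - M j) =
      c (n + 1) * M n - c (m + 1) * M m + ∑ j ∈ Ico m n, (c (j + 1) - c (j + 2)) * M (j + 1) := by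
  rw [← sum_Ico_sub (fun j => c (j + 1) * M j) hmn, ← sum_add_distrib]
  exact sum_congr rfl fun j _ => by ring

theorem abs_sub_le_two_mul_max (a b : ℝ) : |a - b| ≤ 2 * max |a| |b| := by
  linarith [abs_sub a b, le_max_left |a| |b|, le_max_right |a| |b|]

/-- One step of the Abel estimate: `b x = c k`, `a y = c (k+1)`, and the right-hand side is
`D c k + Φ k - Φ (k-1)`. -/
theorem abel_summand_le {a b x y w w' s s' D : ℝ} (ha : 0 ≤ a) (hab : a ≤ b) (hx : 0 ≤ x)
    (hxy : (1 - b) * x ≤ y) (hw : 0 ≤ w) (hww : w - w' ≤ s) (hD : 2 * b * w + s ≤ D)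
    (hs : s ≤ s') :
    |b * x - a * y| * w ≤
      D * (b * x) + ((D - s) * y - a * y * w) - ((D - s') * x - b * x * w') := by
  have hbx : 0 ≤ b * x := mul_nonneg (ha.trans hab) hx
  have hDs : 0 ≤ (D - s) * (y - (1 - b) * x) :=
    mul_nonneg (by nlinarith [mul_nonneg (ha.trans hab) hw]) (sub_nonneg.2 hxy)
  have hdrift : b * x * (w - w') ≤ b * x * s := mul_le_mul_of_nonneg_left hww hbx
  have hsx : 0 ≤ (s' - s) * x := mul_nonneg (sub_nonneg.2 hs) hx
  rcases le_total (a * y) (b * x) with h | h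
  · rw [abs_of_nonneg (sub_nonneg.2 h)]
    nlinarith
  · rw [abs_of_nonpos (sub_nonpos.2 h)]
    have hgain : a * y - b * x ≤ a * (y - (1 - b) * x) := by nlinarith [mul_nonneg ha hbx]
    have hgain' : 2 * (a * y - b * x) * w ≤ (D - s) * (y - (1 - b) * x) := by
      nlinarith [mul_le_mul_of_nonneg_right hgain hw, mul_le_mul_of_nonneg_right hab hw,
        mul_nonneg (mul_nonneg ha hw) (sub_nonneg.2 hxy)]
    nlinarith

theorem abs_sum_Ico_mul_sub_le {γ F M w s : ℕ → ℝ} {D : ℝ} {m n : ℕ} (hmn : m ≤ n)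
    (hγ : ∀ k, m ≤ k → 0 ≤ γ k ∧ γ (k + 1) ≤ γ k)
    (hF : ∀ k, m ≤ k → 0 ≤ F k) (hFγ : ∀ k, m ≤ k → (1 - γ (k + 1)) * F k ≤ F (k + 1))
    (hMw : ∀ k, m ≤ k → |M k| ≤ w k) (hws : ∀ k, m ≤ k → w (k + 1) - w k ≤ s (k + 1))
    (hs : ∀ k, m ≤ k → 0 ≤ s k) (hs_anti : ∀ k, m ≤ k → s (k + 1) ≤ s k)
    (hD : ∀ k, m ≤ k → 2 * γ k * w k + s k ≤ D) :
    |∑ j ∈ Ico m n, γ (j + 1) * F j * (M (j + 1) - M j)| ≤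
      D * (∑ j ∈ Ico m n, γ (j + 1) * F j + F n) := by
  set c : ℕ → ℝ := fun k => γ k * F (k - 1) with hc
  have hc1 : ∀ k, c (k + 1) = γ (k + 1) * F k := fun k => by simp [hc]
  have hw : ∀ k, m ≤ k → 0 ≤ w k := fun k hk => (abs_nonneg _).trans (hMw k hk)
  have hc0 : ∀ k, m ≤ k → 0 ≤ c (k + 1) := fun k hk => by
    rw [hc1]; exact mul_nonneg (hγ (k + 1) (by omega)).1 (hF k hk)
  set Φ : ℕ → ℝ := fun k => (D - s k) * F k - c (k + 1) * w k with hΦ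
  have htel : ∑ j ∈ Ico m n, |c (j + 1) - c (j + 2)| * w (j + 1) ≤
      D * ∑ j ∈ Ico m n, c (j + 1) + (Φ n - Φ m) := by
    rw [← sum_Ico_sub Φ hmn, mul_sum, ← sum_add_distrib]
    refine sum_le_sum fun j hj => ?_
    have hj : m ≤ j := (mem_Ico.1 hj).1
    have := abel_summand_le (hγ (j + 2) (by omega)).1 (hγ (j + 1) (by omega)).2 (hF j hj)
      (hFγ j hj) (hw (j + 1) (by omega)) (hws j hj) (hD (j + 1) (by omega)) (hs_anti j hj)
    simp only [hΦ, hc1]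
    linarith
  have habel : |∑ j ∈ Ico m n, c (j + 1) * (M (j + 1) - M j)| ≤
      c (n + 1) * w n + c (m + 1) * w m + ∑ j ∈ Ico m n, |c (j + 1) - c (j + 2)| * w (j + 1) := by
    rw [sum_Ico_mul_sub_eq c M hmn]
    refine (abs_add_le _ _).trans (add_le_add ((abs_sub _ _).trans (add_le_add ?_ ?_)) ?_)
    · rw [abs_mul, abs_of_nonneg (hc0 n hmn)]
      exact mul_le_mul_of_nonneg_left (hMw n hmn) (hc0 n hmn)
    · rw [abs_mul, abs_of_nonneg (hc0 m le_rfl)]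
      exact mul_le_mul_of_nonneg_left (hMw m le_rfl) (hc0 m le_rfl)
    · refine (abs_sum_le_sum_abs _ _).trans (sum_le_sum fun j hj => ?_)
      rw [abs_mul]
      exact mul_le_mul_of_nonneg_left (hMw _ (by have := (mem_Ico.1 hj).1; omega)) (abs_nonneg _)
  have hbdry : 2 * (c (m + 1) * w m) ≤ (D - s m) * F m := by
    rw [hc1]
    nlinarith [mul_le_mul_of_nonneg_right (hγ m le_rfl).2 (mul_nonneg (hw m le_rfl) (hF m le_rfl)),
      hD m le_rfl, hF m le_rfl]
  simp only [hΦ, hc1] at habel htel hbdry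
  nlinarith [mul_nonneg (hs n hmn) (hF n hmn)]

theorem abs_sum_Ico_mul_sub_le_of_antitone {γ F M b φ : ℕ → ℝ} {D : ℝ} {m n : ℕ} (hmn : m ≤ n)
    (hγ : ∀ k, m ≤ k → 0 ≤ γ k ∧ γ (k + 1) ≤ γ k)
    (hF : ∀ k, m ≤ k → 0 ≤ F k) (hFγ : ∀ k, m ≤ k → (1 - γ (k + 1)) * F k ≤ F (k + 1))
    (hb : Antitone b) (hb0 : ∀ k, 0 ≤ b k) (hφ : ∀ k, m ≤ k → 0 ≤ φ k)
    (hΔφ : ∀ k, m ≤ k → 0 ≤ φ k - φ (k - 1))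
    (hφconc : ∀ k, m ≤ k → φ (k + 1) - φ k ≤ φ k - φ (k - 1))
    (hM : ∀ k, m ≤ k → |M k| ≤ 2 * (b k * φ k))
    (hD : ∀ k, m ≤ k → 2 * (b k * ((φ k - φ (k - 1)) + 2 * γ k * φ k)) ≤ D) :
    |∑ j ∈ Ico m n, γ (j + 1) * F j * (M (j + 1) - M j)| ≤
      D * (∑ j ∈ Ico m n, γ (j + 1) * F j + F n) := by
  refine abs_sum_Ico_mul_sub_le (w := fun k => 2 * (b k * φ k))
    (s := fun k => 2 * (b k * (φ k - φ (k - 1)))) hmn hγ hF hFγ hM (fun k hk => ?_)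
    (fun k hk => by simpa using mul_nonneg (hb0 k) (hΔφ k hk)) (fun k hk => ?_)
    (fun k hk => by linarith [hD k hk])
  · have := mul_le_mul_of_nonneg_right (hb k.le_succ) (hφ k hk)
    simp only [Nat.add_sub_cancel]
    linarith
  · have := hΔφ (k + 1) (by omega)
    simp only [Nat.add_sub_cancel] at this ⊢
    nlinarith [mul_le_mul (hb k.le_succ) (hφconc k hk) this (hb0 k)]

def runningMin {α : Type*} [LinearOrder α] (β : ℕ → α) (k : ℕ) : α :=
  (range (k + 1)).inf' nonempty_range_add_one β

section runningMin

variable {α : Type*} [LinearOrder α] (β : ℕ → α)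

theorem runningMin_le {j k : ℕ} (h : j ≤ k) : runningMin β k ≤ β j :=
  inf'_le β (mem_range.2 (by omega))

theorem le_runningMin {a : α} {k : ℕ} (h : ∀ j ≤ k, a ≤ β j) : a ≤ runningMin β k :=
  le_inf' _ β fun j hj => h j (Nat.lt_succ_iff.1 (mem_range.1 hj))

theorem runningMin_antitone : Antitone (runningMin β) := fun _ _ h =>
  inf'_mono β (range_subset_range.2 (by omega)) _

theorem exists_runningMin_eq (k : ℕ) : ∃ j ≤ k, runningMin β k = β j := by
  obtain ⟨j, hj, he⟩ := exists_mem_eq_inf' nonempty_range_add_one β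
  exact ⟨j, Nat.lt_succ_iff.1 (mem_range.1 hj), he⟩

end runningMin

theorem abs_sum_Ico_mul_sub_le_of_le_mul {γ F M β φ : ℕ → ℝ} {D : ℝ} {m n : ℕ} (hmn : m ≤ n)
    (hγ : ∀ k, m ≤ k → 0 ≤ γ k ∧ γ (k + 1) ≤ γ k)
    (hF : ∀ k, m ≤ k → 0 ≤ F k) (hFγ : ∀ k, m ≤ k → (1 - γ (k + 1)) * F k ≤ F (k + 1))
    (hβ : ∀ k, 0 ≤ β k) (hφ : ∀ k, m ≤ k → 0 ≤ φ k)
    (hΔφ : ∀ k, m ≤ k → 0 ≤ φ k - φ (k - 1))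
    (hφconc : ∀ k, m ≤ k → φ (k + 1) - φ k ≤ φ k - φ (k - 1))
    (hM : ∀ j k, j ≤ k → |M k| ≤ 2 * (β j * φ k))
    (hD : ∀ k, m ≤ k → 2 * (β k * ((φ k - φ (k - 1)) + 2 * γ k * φ k)) ≤ D) :
    |∑ j ∈ Ico m n, γ (j + 1) * F j * (M (j + 1) - M j)| ≤
      D * (∑ j ∈ Ico m n, γ (j + 1) * F j + F n) := by
  refine abs_sum_Ico_mul_sub_le_of_antitone hmn hγ hF hFγ (runningMin_antitone β)
    (fun k => le_runningMin β fun j _ => hβ j) hφ hΔφ hφconc (fun k _ => ?_) (fun k hk => ?_)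
  · obtain ⟨j, hjk, hj⟩ := exists_runningMin_eq β k
    exact hj ▸ hM j k hjk
  · have hinc : 0 ≤ (φ k - φ (k - 1)) + 2 * γ k * φ k :=
      add_nonneg (hΔφ k hk) (mul_nonneg (mul_nonneg zero_le_two (hγ k hk).1) (hφ k hk))
    have := mul_le_mul_of_nonneg_right (runningMin_le β (le_refl k)) hinc
    linarith [hD k hk]

def NarendraUpdate (γ : ℕ → ℝ) (U : ℕ → Bool) (ηA ηB X : ℕ → ℝ) : Prop :=
  ∀ n : ℕ, X (n + 1) = if U (n + 1) = true ∧ ηA (n + 1) = 1 then X n + γ (n + 1) * (1 - X n)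
    else if U (n + 1) = false ∧ ηB (n + 1) = 1 then (1 - γ (n + 1)) * X n
    else X n

namespace NarendraUpdate

variable {γ : ℕ → ℝ} {U : ℕ → Bool} {ηA ηB X : ℕ → ℝ}

theorem mem_Icc (h : NarendraUpdate γ U ηA ηB X) (hγ : ∀ n, γ (n + 1) ∈ Set.Icc (0 : ℝ) 1)
    (hX0 : X 0 ∈ Set.Icc (0 : ℝ) 1) (n : ℕ) : X n ∈ Set.Icc (0 : ℝ) 1 := by
  induction n with
  | zero => exact hX0
  | succ n ih =>
    obtain ⟨hg0, hg1⟩ := hγ n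
    obtain ⟨hx0, hx1⟩ := ih
    rw [h n]
    split_ifs
    · constructor <;> nlinarith
    · constructor <;> nlinarith
    · exact ⟨hx0, hx1⟩

theorem growth (h : NarendraUpdate γ U ηA ηB X) {n : ℕ} (hγ : γ (n + 1) ∈ Set.Icc (0 : ℝ) 1)
    (hX : X n ∈ Set.Icc (0 : ℝ) 1) :
    (1 - γ (n + 1)) * (X n * (1 - X n)) ≤ X (n + 1) * (1 - X (n + 1)) := by
  obtain ⟨hg0, hg1⟩ := hγ
  obtain ⟨hx0, hx1⟩ := hX
  have hg : 0 ≤ γ (n + 1) * (1 - γ (n + 1)) := mul_nonneg hg0 (by linarith)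
  rw [h n]
  split_ifs
  · nlinarith [mul_nonneg hg (sq_nonneg (1 - X n))]
  · nlinarith [mul_nonneg hg (sq_nonneg (X n))]
  · nlinarith [mul_nonneg hg0 (mul_nonneg hx0 (sub_nonneg.2 hx1))]

end NarendraUpdate

/-- `U k = true` means arm A is played at time `k`. -/
theorem stmt_17_general (γ : ℕ → ℝ) (X : ℕ → ℝ) (U : ℕ → Bool)
    (ηA ηB : ℕ → ℝ) (θA θB : ℝ) (f : ℝ → ℝ)
    (φ : ℕ → ℝ) (R β R' Λ : ℕ → ℝ) (k₀ : ℕ)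
    (hf : ∀ y, f y = y * (1 - y))
    (hpos : ∀ n, 1 ≤ n → 0 < γ n) (hlt : ∀ n, 1 ≤ n → γ n < 1)
    (hmono : ∀ n, 1 ≤ n → γ (n + 1) ≤ γ n)
    (hX0 : 0 < X 0) (hX1 : X 0 < 1)
    (hupdate : ∀ n : ℕ,
      X (n + 1) = if U (n + 1) = true ∧ ηA (n + 1) = 1 then X n + γ (n + 1) * (1 - X n)
        else if U (n + 1) = false ∧ ηB (n + 1) = 1 then (1 - γ (n + 1)) * X n
        else X n)
    (hφpos : ∀ k, 0 ≤ φ k)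
    (hφmono : ∀ k, k₀ ≤ k → φ k ≤ φ (k + 1))
    (hφconc : ∀ k, k₀ ≤ k → φ (k + 1) - φ k ≤ φ k - φ (k - 1))
    (hR : ∀ n, R n = max |∑ i ∈ Finset.Icc 1 n, (ηA i - θA)|
                         |∑ i ∈ Finset.Icc 1 n, (ηB i - θB)|)
    (hβ : ∀ n k, n ≤ k → R k ≤ β n * φ k) (hβpos : ∀ n, 0 ≤ β n)
    (hR' : ∀ n k, n ≤ k →
      2 * (β k * ((φ k - φ (k - 1)) + 2 * γ k * φ k)) / (1 - γ n) ≤ R' n)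
    (hΛ : ∀ n, Λ n = ∑ k ∈ Finset.Icc 1 n, γ k * f (X (k - 1)) * (ηA k - ηB k - (θA - θB))) :
    ∀ m n, k₀ ≤ m → 1 ≤ m → m ≤ n →
      |Λ n - Λ m| ≤ R' m * ((∑ k ∈ Finset.Icc (m + 1) n, γ k * f (X (k - 1))) + 2 * f (X n)) := by
  intro m n hk₀m hm hmn
  have hγ : ∀ k, 1 ≤ k → γ k ∈ Set.Icc (0 : ℝ) 1 := fun k hk => ⟨(hpos k hk).le, (hlt k hk).le⟩
  have hN : NarendraUpdate γ U ηA ηB X := hupdate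
  have hX := hN.mem_Icc (fun k => hγ _ k.succ_pos) ⟨hX0.le, hX1.le⟩
  have hF : ∀ k, 0 ≤ f (X k) := fun k => by
    rw [hf]; exact mul_nonneg (hX k).1 (sub_nonneg.2 (hX k).2)
  have hΔφ : ∀ k, k₀ ≤ k → 0 ≤ φ k - φ (k - 1) := fun k hk => by
    linarith [hφconc k hk, hφmono k hk]
  have hnum : ∀ k, m ≤ k → 0 ≤ 2 * (β k * ((φ k - φ (k - 1)) + 2 * γ k * φ k)) := fun k hk =>
    mul_nonneg zero_le_two (mul_nonneg (hβpos k) (add_nonneg (hΔφ k (hk₀m.trans hk))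
      (mul_nonneg (mul_nonneg zero_le_two (hγ k (hm.trans hk)).1) (hφpos k))))
  have hD : ∀ k, m ≤ k → 2 * (β k * ((φ k - φ (k - 1)) + 2 * γ k * φ k)) ≤ R' m := fun k hk =>
    (le_div_self (hnum k hk) (by linarith [hlt m hm]) (by linarith [(hγ m hm).1])).trans
      (hR' m k hk)
  obtain ⟨M, hM⟩ : ∃ M : ℕ → ℝ, ∀ k,
      M k = (∑ i ∈ Icc 1 k, (ηA i - θA)) - ∑ i ∈ Icc 1 k, (ηB i - θB) := ⟨_, fun _ => rfl⟩
  have hΛ' : Λ n - Λ m = ∑ j ∈ Ico m n, γ (j + 1) * f (X j) * (M (j + 1) - M j) := by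
    rw [hΛ, hΛ, sum_Icc_one_sub_sum_Icc_one _ hmn]
    refine sum_congr rfl fun j _ => ?_
    rw [hM, hM, sum_Icc_succ_top (by omega), sum_Icc_succ_top (by omega), Nat.add_sub_cancel]
    ring
  have hMβ : ∀ j k, j ≤ k → |M k| ≤ 2 * (β j * φ k) := fun j k hjk => by
    rw [hM]
    exact (abs_sub_le_two_mul_max _ _).trans (by rw [← hR]; linarith [hβ j k hjk])
  have key := abs_sum_Ico_mul_sub_le_of_le_mul (F := fun k => f (X k)) hmn
    (fun k hk => ⟨(hγ k (hm.trans hk)).1, hmono k (hm.trans hk)⟩) (fun k _ => hF k)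
    (fun k _ => by simpa only [hf] using hN.growth (hγ _ k.succ_pos) (hX k)) hβpos
    (fun k _ => hφpos k) (fun k hk => hΔφ k (hk₀m.trans hk))
    (fun k hk => hφconc k (hk₀m.trans hk)) hMβ hD
  rw [hΛ', sum_Icc_add_one_eq_sum_Ico]
  simp only [Nat.add_sub_cancel]
  exact key.trans (mul_le_mul_of_nonneg_left (by linarith [hF n])
    ((hnum m le_rfl).trans (hD m le_rfl)))

/-- `U k = true` means arm A is played at time `k`.  `R' n` is assumed to be
`2 sup_{k ≥ n} β k (φ'(k) + 2 γ k φ(k)) / (1 - γ n)`: we state this through the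
upper-bound property. -/
theorem stmt_17 (γ : ℕ → ℝ) (S : ℕ → ℝ) (X : ℕ → ℝ) (U : ℕ → Bool)
    (ηA ηB : ℕ → ℝ) (θA θB : ℝ) (f : ℝ → ℝ)
    (φ : ℕ → ℝ) (R β R' Λ : ℕ → ℝ) (k₀ : ℕ)
    (hf : ∀ y, f y = y * (1 - y))
    (hpos : ∀ n, 1 ≤ n → 0 < γ n) (hlt : ∀ n, 1 ≤ n → γ n < 1)
    (hmono : ∀ n, 1 ≤ n → γ (n + 1) ≤ γ n)
    (hS : ∀ n, S n = (∏ k ∈ Finset.Icc 1 n, (1 - γ k))⁻¹)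
    (hηA : ∀ k, ηA k = 0 ∨ ηA k = 1) (hηB : ∀ k, ηB k = 0 ∨ ηB k = 1)
    (hθA : θA ∈ Set.Ioo (0:ℝ) 1) (hθB : θB ∈ Set.Ioo (0:ℝ) 1)
    (hX0 : 0 < X 0) (hX1 : X 0 < 1)
    (hupdate : ∀ n : ℕ,
      X (n + 1) = if U (n + 1) = true ∧ ηA (n + 1) = 1 then X n + γ (n + 1) * (1 - X n)
        else if U (n + 1) = false ∧ ηB (n + 1) = 1 then (1 - γ (n + 1)) * X n
        else X n)
    (hφpos : ∀ k, 0 ≤ φ k)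
    (hφmono : ∀ k, k₀ ≤ k → φ k ≤ φ (k + 1))
    (hφconc : ∀ k, k₀ ≤ k → φ (k + 1) - φ k ≤ φ k - φ (k - 1))
    (hR : ∀ n, R n = max |∑ i ∈ Finset.Icc 1 n, (ηA i - θA)|
                         |∑ i ∈ Finset.Icc 1 n, (ηB i - θB)|)
    (hβ : ∀ n k, n ≤ k → R k ≤ β n * φ k) (hβpos : ∀ n, 0 ≤ β n)
    (hR' : ∀ n k, n ≤ k →
      2 * (β k * ((φ k - φ (k - 1)) + 2 * γ k * φ k)) / (1 - γ n) ≤ R' n)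
    (hΛ : ∀ n, Λ n = ∑ k ∈ Finset.Icc 1 n, γ k * f (X (k - 1)) * (ηA k - ηB k - (θA - θB))) :
    ∀ m n, k₀ ≤ m → 1 ≤ m → m ≤ n →
      |Λ n - Λ m| ≤ R' m * ((∑ k ∈ Finset.Icc (m + 1) n, γ k * f (X (k - 1))) + 2 * f (X n)) :=
  stmt_17_general γ X U ηA ηB θA θB f φ R β R' Λ k₀ hf hpos hlt hmono hX0 hX1 hupdate hφpos hφmono
    hφconc hR hβ hβpos hR' hΛ
end
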